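/- arXiv:2201.05949 — 4 statements merged into one kernel-verified Lean document; each statement's English description precedes it below -/
import Mathlib

section
/- Let Ω ⊆ ℂ be open, λ₀ ∈ Ω, and let 𝔏 : Ω → Mat_N(ℂ) be an analytic family of matrices. Let K := ker 𝔏(λ₀) ⊆ ℂ^N and R := range 𝔏(λ₀) ⊆ ℂ^N, and suppose the transversality condition of Crandall–Rabinowitz holds: the image 𝔏'(λ₀)(K) and R form an internal direct sum decomposition 𝔏'(λ₀)(K) ⊕ R = ℂ^N. Then the order of vanishing at λ₀ of λ ↦ det 𝔏(λ) equals dim K = dim ker 𝔏(λ₀). -/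
/-!
Pick a basis `(b_K, b_C)` of `ℂ^N` whose first part spans `K = ker 𝔏(λ₀)`. Then
`det 𝔏(z) = det_b (𝔏(z) b)`, and every column `𝔏(z) b_K i` vanishes at `λ₀`, so it is
`(z - λ₀)` times its divided difference at `λ₀`. Pulling these factors out gives
`det 𝔏(z) = (z - λ₀) ^ dim K * g(z)` with `g` analytic, and `g(λ₀)` is the determinant of the
`N` columns `𝔏'(λ₀) b_K` and `𝔏(λ₀) b_C`. They span `𝔏'(λ₀) K + range 𝔏(λ₀) = ℂ^N`, so they
form a basis and `g(λ₀) ≠ 0`.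
-/

open Module Submodule Matrix

section Analytic

variable {𝕜 E F : Type*} [NontriviallyNormedField 𝕜] [NormedAddCommGroup E] [NormedSpace 𝕜 E]
  [NormedAddCommGroup F] [NormedSpace 𝕜 F] {m n ι : Type*} [Fintype n] {x : E}

theorem AnalyticAt.dslope {f : 𝕜 → F} {a : 𝕜} (hf : AnalyticAt 𝕜 f a) :
    AnalyticAt 𝕜 (dslope f a) a :=
  let ⟨_, hp⟩ := hf
  ⟨_, hp.has_fpower_series_dslope_fslope⟩

theorem AnalyticAt.matrix_mulVec [Fintype m] {A : E → Matrix m n 𝕜}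
    (hA : ∀ i j, AnalyticAt 𝕜 (fun z => A z i j) x) (v : n → 𝕜) :
    AnalyticAt 𝕜 (fun z => A z *ᵥ v) x :=
  AnalyticAt.pi fun i => Finset.analyticAt_fun_sum _ fun j _ => (hA i j).mul analyticAt_const

theorem AnalyticAt.matrix_det [DecidableEq n] {A : E → Matrix n n 𝕜}
    (hA : ∀ i j, AnalyticAt 𝕜 (fun z => A z i j) x) :
    AnalyticAt 𝕜 (fun z => (A z).det) x := by
  simp only [Matrix.det_apply']
  exact Finset.analyticAt_fun_sum _ fun σ _ =>
    analyticAt_const.mul (Finset.analyticAt_fun_prod _ fun i _ => hA (σ i) i)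

theorem AnalyticAt.basis_det [CompleteSpace 𝕜] [Fintype ι] [DecidableEq ι]
    [FiniteDimensional 𝕜 F] (b : Basis ι 𝕜 F) {v : E → ι → F}
    (hv : ∀ j, AnalyticAt 𝕜 (fun z => v z j) x) :
    AnalyticAt 𝕜 (fun z => b.det (v z)) x := by
  simp only [b.det_apply]
  refine AnalyticAt.matrix_det fun i j => ?_
  exact analyticAt_pi_iff.mp ((b.equivFunL : F →L[𝕜] ι → 𝕜).analyticAt _ |>.comp (hv j)) i

theorem HasDerivAt.matrix_mulVec {A : 𝕜 → Matrix m n 𝕜} {A' : Matrix m n 𝕜} {a : 𝕜}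
    (hA : ∀ i j, HasDerivAt (fun z => A z i j) (A' i j) a) (v : n → 𝕜) :
    HasDerivAt (fun z => A z *ᵥ v) (A' *ᵥ v) a :=
  hasDerivAt_pi.mpr fun i => HasDerivAt.fun_sum fun j _ => (hA i j).mul_const (v j)

end Analytic

theorem Module.Basis.det_eq_sub_pow_mul_det_dslope {𝕜 E ι κ : Type*} [NontriviallyNormedField 𝕜]
    [NormedAddCommGroup E] [NormedSpace 𝕜 E] [Fintype ι] [Fintype κ] [DecidableEq (ι ⊕ κ)]
    (b : Basis (ι ⊕ κ) 𝕜 E) (u : 𝕜 → ι ⊕ κ → E) {a : 𝕜} (hu : ∀ i, u a (.inl i) = 0) (z : 𝕜) :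
    b.det (u z) = (z - a) ^ Fintype.card ι *
      b.det (Sum.elim (fun i => dslope (fun t => u t (.inl i)) a z) (fun j => u z (.inr j))) := by
  have hfactor : u z = fun j => Sum.elim (fun _ => z - a) (fun _ => 1) j •
      Sum.elim (fun i => dslope (fun t => u t (.inl i)) a z) (fun j => u z (.inr j)) j := by
    funext j
    rcases j with i | j
    · simp [sub_smul_dslope, hu]
    · simp
  rw [hfactor, AlternatingMap.map_smul_univ, Fintype.prod_sum_type, smul_eq_mul]
  simp

theorem Matrix.det_eq_basis_det_mulVec {R n ι : Type*} [CommRing R] [Fintype n] [DecidableEq n]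
    [Fintype ι] [DecidableEq ι] (A : Matrix n n R) (b : Basis ι R (n → R)) :
    A.det = b.det fun j => A *ᵥ b j := by
  have h := b.det_comp (toLin' A) b
  rw [b.det_self, mul_one, LinearMap.det_toLin'] at h
  exact h.symm

theorem Module.Basis.det_ne_zero_of_span_eq_top {K V ι : Type*} [Field K] [AddCommGroup V]
    [Module K V] [Fintype ι] [DecidableEq ι] (b : Basis ι K V) {v : ι → V}
    (hv : span K (Set.range v) = ⊤) : b.det v ≠ 0 := by
  have hli := linearIndependent_of_top_le_span_of_card_eq_finrank hv.ge
    (finrank_eq_card_basis b).symm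
  exact ((b.is_basis_iff_det).mp ⟨hli, hv⟩).ne_zero

noncomputable def Module.Basis.sumOfIsCompl {R V ι κ : Type*} [Ring R] [AddCommGroup V] [Module R V]
    {p q : Submodule R V} (h : IsCompl p q) (bp : Basis ι R p) (bq : Basis κ R q) :
    Basis (ι ⊕ κ) R V :=
  (bp.prod bq).map (prodEquivOfIsCompl p q h)

theorem Module.Basis.span_range_sumOfIsCompl_inl {R V ι κ : Type*} [Ring R] [AddCommGroup V]
    [Module R V] {p q : Submodule R V} (h : IsCompl p q) (bp : Basis ι R p) (bq : Basis κ R q) :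
    span R (Set.range (sumOfIsCompl h bp bq ∘ Sum.inl)) = p := by
  have : sumOfIsCompl h bp bq ∘ Sum.inl = p.subtype ∘ bp := by
    funext i
    simp [sumOfIsCompl]
  rw [this, Set.range_comp, span_image, bp.span_eq, map_subtype_top]

theorem LinearMap.span_sumElim_eq_map_ker_sup_range {R V W ι κ : Type*} [Ring R] [AddCommGroup V]
    [Module R V] [AddCommGroup W] [Module R W] (b : Basis (ι ⊕ κ) R V) (A D : V →ₗ[R] W)
    (hb : span R (Set.range (b ∘ Sum.inl)) = ker A) :
    span R (Set.range (Sum.elim (fun i => D (b (.inl i))) fun j => A (b (.inr j)))) =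
      (ker A).map D ⊔ range A := by
  have hA : range A = span R (Set.range fun j => A (b (.inr j))) := by
    conv_lhs => rw [range_eq_map, ← b.span_eq, ← Sum.elim_comp_inl_inr b, Set.Sum.elim_range,
      span_union, hb, Submodule.map_sup, map_span, ← Set.range_comp]
    rw [LinearMap.le_ker_iff_map.mp le_rfl, bot_sup_eq]
    rfl
  rw [Set.Sum.elim_range, span_union, ← hb, hA, map_span, ← Set.range_comp]
  rfl

theorem orderOfVanishing_eq_dim_ker_of_transversal_general
    {N : ℕ} (Ω : Set ℂ) (lam₀ : ℂ) (hlam₀ : lam₀ ∈ Ω)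
    (𝔏 : ℂ → Matrix (Fin N) (Fin N) ℂ)
    (hanal : ∀ i j, AnalyticOnNhd ℂ (fun z => 𝔏 z i j) Ω)
    (L' : Matrix (Fin N) (Fin N) ℂ)
    (hder : ∀ i j, HasDerivAt (fun z => 𝔏 z i j) (L' i j) lam₀)
    (htrans_sup :
      (LinearMap.ker (𝔏 lam₀).mulVecLin).map L'.mulVecLin ⊔
        LinearMap.range (𝔏 lam₀).mulVecLin = ⊤) :
    ∃ g : ℂ → ℂ, AnalyticAt ℂ g lam₀ ∧ g lam₀ ≠ 0 ∧
      ∀ᶠ z in nhds lam₀,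
        (𝔏 z).det =
          (z - lam₀) ^ (Module.finrank ℂ (LinearMap.ker (𝔏 lam₀).mulVecLin)) * g z := by
  classical
  set K := LinearMap.ker (𝔏 lam₀).mulVecLin
  obtain ⟨K', hK'⟩ := K.exists_isCompl
  set b := Basis.sumOfIsCompl hK' (finBasis ℂ K) (finBasis ℂ K')
  have hbK : span ℂ (Set.range (b ∘ Sum.inl)) = K := Basis.span_range_sumOfIsCompl_inl ..
  have hanal₀ : ∀ i j, AnalyticAt ℂ (fun z => 𝔏 z i j) lam₀ := fun i j => hanal i j lam₀ hlam₀
  set col : ℂ → Fin (finrank ℂ K) ⊕ Fin (finrank ℂ K') → Fin N → ℂ := fun z =>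
    Sum.elim (fun i => dslope (fun t => 𝔏 t *ᵥ b (.inl i)) lam₀ z) fun j => 𝔏 z *ᵥ b (.inr j)
  have hcol₀ : col lam₀ = Sum.elim (fun i => L' *ᵥ b (.inl i)) fun j => 𝔏 lam₀ *ᵥ b (.inr j) := by
    funext j
    rcases j with i | j
    · exact (dslope_same _ _).trans (HasDerivAt.matrix_mulVec hder _).deriv
    · rfl
  refine ⟨fun z => b.det (col z), ?_, ?_, .of_forall fun z => ?_⟩
  · refine AnalyticAt.basis_det b fun j => ?_
    rcases j with i | j
    · exact (AnalyticAt.matrix_mulVec hanal₀ _).dslope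
    · exact AnalyticAt.matrix_mulVec hanal₀ _
  · show b.det (col lam₀) ≠ 0
    rw [hcol₀]
    refine b.det_ne_zero_of_span_eq_top ?_
    have hspan := LinearMap.span_sumElim_eq_map_ker_sup_range b (𝔏 lam₀).mulVecLin L'.mulVecLin hbK
    simp only [mulVecLin_apply] at hspan
    rw [hspan, htrans_sup]
  · have hker (i) : 𝔏 lam₀ *ᵥ b (.inl i) = 0 := hbK.le (subset_span ⟨i, rfl⟩)
    rw [det_eq_basis_det_mulVec _ b, b.det_eq_sub_pow_mul_det_dslope (fun t j => 𝔏 t *ᵥ b j) hker,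
      Fintype.card_fin]

/-- Crandall–Rabinowitz transversality: if `𝔏` is an analytic matrix family on an
open `Ω ⊆ ℂ`, `λ₀ ∈ Ω`, `K = ker 𝔏(λ₀)`, `R = range 𝔏(λ₀)`, and
`𝔏'(λ₀)(K) ⊕ R = ℂ^N` is an internal direct sum, then the order of vanishing at
`λ₀` of `λ ↦ det 𝔏(λ)` equals `dim K`. -/
theorem orderOfVanishing_eq_dim_ker_of_transversal
    {N : ℕ} (Ω : Set ℂ) (hΩ : IsOpen Ω) (lam₀ : ℂ) (hlam₀ : lam₀ ∈ Ω)
    (𝔏 : ℂ → Matrix (Fin N) (Fin N) ℂ)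
    (hanal : ∀ i j, AnalyticOnNhd ℂ (fun z => 𝔏 z i j) Ω)
    (L' : Matrix (Fin N) (Fin N) ℂ)
    (hder : ∀ i j, HasDerivAt (fun z => 𝔏 z i j) (L' i j) lam₀)
    (htrans_inf :
      (LinearMap.ker (𝔏 lam₀).mulVecLin).map L'.mulVecLin ⊓
        LinearMap.range (𝔏 lam₀).mulVecLin = ⊥)
    (htrans_sup :
      (LinearMap.ker (𝔏 lam₀).mulVecLin).map L'.mulVecLin ⊔
        LinearMap.range (𝔏 lam₀).mulVecLin = ⊤) :
    ∃ g : ℂ → ℂ, AnalyticAt ℂ g lam₀ ∧ g lam₀ ≠ 0 ∧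
      ∀ᶠ z in nhds lam₀,
        (𝔏 z).det =
          (z - lam₀) ^ (Module.finrank ℂ (LinearMap.ker (𝔏 lam₀).mulVecLin)) * g z :=
  orderOfVanishing_eq_dim_ker_of_transversal_general Ω lam₀ hlam₀ 𝔏 hanal L' hder htrans_sup
end

section
/- Let Ω ⊆ ℂ be open, λ₀ ∈ Ω, let 𝔏 : Ω → Mat_N(ℂ) be an analytic family of matrices, and set 𝔏_j := 𝔏^{(j)}(λ₀)/j! for j ≥ 0, viewed as linear maps ℂ^N → ℂ^N. For j ≥ 1 let K_j := ⋂_{i=0}^{j-1} ker 𝔏_i. Suppose λ₀ is a κ-transversal eigenvalue of 𝔏, i.e., ℂ^N is the internal direct sum of range 𝔏_0 and the subspaces 𝔏_1(K_1), 𝔏_2(K_2), …, 𝔏_κ(K_κ), and 𝔏_κ(K_κ) ≠ {0}. Then the order of vanishing at λ₀ of λ ↦ det 𝔏(λ) equals ∑_{j=1}^{κ} j · dim 𝔏_j(K_j). -/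
/-!
Choose a basis `w` of `ℂ^N` adapted to `V_0 ⊕ ⋯ ⊕ V_κ` and, for `w_c ∈ V_j`, a preimage
`e_c ∈ K_j` with `𝔏_j e_c = w_c`. As `𝔏_i e_c = 0` for `i < j`, Taylor's theorem gives
`𝔏(λ) e_c = (λ - λ₀)^j h_c(λ)` with `h_c` analytic and `h_c(λ₀) = w_c`. The `e_c` are linearly
independent (apply `𝔏_j` to a relation, `j` the least level occurring in it), so for the constant
matrix `B = (e_c)_c` and `G(λ) = (h_c(λ))_c` we get
`det 𝔏(λ) · det B = (λ - λ₀)^(∑_c j_c) · det G(λ)` with `det G(λ₀) = det (w_c)_c ≠ 0`.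
-/

open Filter
open scoped Nat Matrix

theorem AnalyticAt.exists_eq_pow_smul_of_iteratedDeriv_eq_zero
    {𝕜 E : Type*} [NontriviallyNormedField 𝕜] [CharZero 𝕜] [NormedAddCommGroup E]
    [NormedSpace 𝕜 E] [CompleteSpace E] {f : 𝕜 → E} {z₀ : 𝕜} (hf : AnalyticAt 𝕜 f z₀) {n : ℕ}
    (hvanish : ∀ i < n, iteratedDeriv i f z₀ = 0) :
    ∃ g : 𝕜 → E, AnalyticAt 𝕜 g z₀ ∧ g z₀ = (n ! : 𝕜)⁻¹ • iteratedDeriv n f z₀ ∧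
      ∀ z, f z = (z - z₀) ^ n • g z := by
  have hshift : AnalyticAt 𝕜 (fun w => f (w + z₀)) 0 :=
    AnalyticAt.comp (by simpa using hf) (by fun_prop)
  obtain ⟨F, hF, hfF⟩ := hshift.exists_eq_sum_add_pow_mul (n + 1)
  have hF' : AnalyticAt 𝕜 (fun z => F (z - z₀)) z₀ :=
    AnalyticAt.comp (by simpa using hF) (by fun_prop)
  refine ⟨fun z => (n ! : 𝕜)⁻¹ • iteratedDeriv n f z₀ + (z - z₀) • F (z - z₀),
    analyticAt_const.add ((analyticAt_id.sub analyticAt_const).smul hF'), by simp, fun z => ?_⟩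
  have hTaylor := hfF (z - z₀)
  simp only [sub_add_cancel, iteratedDeriv_comp_add_const, zero_add,
    Finset.sum_range_succ] at hTaylor
  rw [hTaylor, Finset.sum_eq_zero fun i hi => by simp [hvanish i (Finset.mem_range.mp hi)]]
  simp only [div_eq_inv_mul, mul_smul, smul_add, pow_succ, zero_add]
  module

section TaylorCoeff

variable {𝕜 : Type*} [NontriviallyNormedField 𝕜] [CharZero 𝕜] [CompleteSpace 𝕜]
  {m n : Type*} [Fintype n]

noncomputable def Matrix.taylorCoeff (M : 𝕜 → Matrix m n 𝕜) (z₀ : 𝕜) (k : ℕ) : Matrix m n 𝕜 :=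
  Matrix.of fun i j => iteratedDeriv k (fun z => M z i j) z₀ / k !

theorem iteratedDeriv_mulVec_apply {M : 𝕜 → Matrix m n 𝕜} {z₀ : 𝕜}
    (hM : ∀ i j, AnalyticAt 𝕜 (fun z => M z i j) z₀) (v : n → 𝕜) (r : m) (k : ℕ) :
    iteratedDeriv k (fun z => (M z *ᵥ v) r) z₀ = k ! * (Matrix.taylorCoeff M z₀ k *ᵥ v) r := by
  simp only [Matrix.mulVec, dotProduct]
  rw [iteratedDeriv_fun_sum (f := fun j z => M z r j * v j)
    fun j _ => ((hM r j).mul analyticAt_const).contDiffAt, Finset.mul_sum]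
  refine Finset.sum_congr rfl fun j _ => ?_
  rw [iteratedDeriv_mul_const_field, Matrix.taylorCoeff, Matrix.of_apply, ← mul_assoc,
    mul_div_cancel₀ _ (by exact_mod_cast k.factorial_ne_zero)]

theorem exists_mulVec_eq_pow_smul {M : 𝕜 → Matrix m n 𝕜} {z₀ : 𝕜}
    (hM : ∀ i j, AnalyticAt 𝕜 (fun z => M z i j) z₀) {v : n → 𝕜} {d : ℕ}
    (hker : ∀ i < d, Matrix.taylorCoeff M z₀ i *ᵥ v = 0) :
    ∃ h : 𝕜 → m → 𝕜, (∀ r, AnalyticAt 𝕜 (fun z => h z r) z₀) ∧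
      h z₀ = Matrix.taylorCoeff M z₀ d *ᵥ v ∧ ∀ z, M z *ᵥ v = (z - z₀) ^ d • h z := by
  have hrow (r : m) : ∃ g : 𝕜 → 𝕜, AnalyticAt 𝕜 g z₀ ∧
      g z₀ = (Matrix.taylorCoeff M z₀ d *ᵥ v) r ∧ ∀ z, (M z *ᵥ v) r = (z - z₀) ^ d • g z := by
    have hanalytic : AnalyticAt 𝕜 (fun z => (M z *ᵥ v) r) z₀ := by
      simp only [Matrix.mulVec, dotProduct]
      exact Finset.analyticAt_fun_sum _ fun j _ => (hM r j).mul analyticAt_const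
    obtain ⟨g, hg, hg₀, hfg⟩ := hanalytic.exists_eq_pow_smul_of_iteratedDeriv_eq_zero
      (n := d) fun i hi => by simp [iteratedDeriv_mulVec_apply hM, hker i hi]
    refine ⟨g, hg, ?_, hfg⟩
    rw [hg₀, iteratedDeriv_mulVec_apply hM, smul_eq_mul, ← mul_assoc,
      inv_mul_cancel₀ (by exact_mod_cast d.factorial_ne_zero), one_mul]
  choose g hg hg₀ hfg using hrow
  exact ⟨fun z r => g r z, hg, funext hg₀, fun z => funext fun r => hfg r z⟩

end TaylorCoeff

theorem analyticAt_det {𝕜 : Type*} [NontriviallyNormedField 𝕜] {n : Type*} [Fintype n]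
    [DecidableEq n] {M : 𝕜 → Matrix n n 𝕜} {z₀ : 𝕜}
    (hM : ∀ i j, AnalyticAt 𝕜 (fun z => M z i j) z₀) :
    AnalyticAt 𝕜 (fun z => (M z).det) z₀ := by
  simp only [Matrix.det_apply, Units.smul_def, zsmul_eq_mul]
  exact Finset.analyticAt_fun_sum _ fun σ _ =>
    analyticAt_const.mul (Finset.analyticAt_fun_prod _ fun i _ => hM (σ i) i)

theorem linearIndependent_of_triangular {R M M' ι : Type*} [Ring R] [AddCommGroup M]
    [Module R M] [AddCommGroup M'] [Module R M'] [Fintype ι] (L : ℕ → M →ₗ[R] M')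
    (deg : ι → ℕ) {e : ι → M} {w : ι → M'} (hw : LinearIndependent R w)
    (hker : ∀ c, ∀ i < deg c, L i (e c) = 0) (hlead : ∀ c, L (deg c) (e c) = w c) :
    LinearIndependent R e := by
  rw [Fintype.linearIndependent_iff]
  intro a hsum
  suffices ∀ d, ∀ c, deg c = d → a c = 0 from fun c => this _ c rfl
  intro d
  induction d using Nat.strong_induction_on with
  | _ d ih =>
    have hterm (c : ι) : a c • L d (e c) = (if deg c = d then a c else 0) • w c := by
      rcases lt_trichotomy (deg c) d with hlt | rfl | hgt
      · simp [ih _ hlt c rfl]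
      · simp [hlead]
      · simp [hker c d hgt, hgt.ne']
    have hw_sum : ∑ c, (if deg c = d then a c else 0) • w c = 0 := by
      simpa [map_sum, hterm] using congrArg (L d) hsum
    intro c hc
    simpa [hc] using Fintype.linearIndependent_iff.mp hw _ hw_sum c

theorem Matrix.det_of_ne_zero_of_linearIndependent {K n : Type*} [Field K] [Fintype n]
    [DecidableEq n] {v : n → n → K} (hv : LinearIndependent K v) : (Matrix.of v).det ≠ 0 :=
  (Matrix.isUnit_iff_isUnit_det _).mp (Matrix.linearIndependent_rows_iff_isUnit.mp hv)
    |>.ne_zero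

section Determinant

variable {𝕜 : Type*} [NontriviallyNormedField 𝕜] [CharZero 𝕜] [CompleteSpace 𝕜]
  {n : Type*} [Fintype n] [DecidableEq n] {M : 𝕜 → Matrix n n 𝕜} {z₀ : 𝕜}

theorem exists_det_eq_pow_mul_of_linearIndependent
    (hM : ∀ i j, AnalyticAt 𝕜 (fun z => M z i j) z₀) (deg : n → ℕ) {e w : n → n → 𝕜}
    (hw : LinearIndependent 𝕜 w)
    (hker : ∀ c, ∀ i < deg c, Matrix.taylorCoeff M z₀ i *ᵥ e c = 0)
    (hlead : ∀ c, Matrix.taylorCoeff M z₀ (deg c) *ᵥ e c = w c) :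
    ∃ g : 𝕜 → 𝕜, AnalyticAt 𝕜 g z₀ ∧ g z₀ ≠ 0 ∧
      ∀ z, (M z).det = (z - z₀) ^ (∑ c, deg c) * g z := by
  have he : LinearIndependent 𝕜 e :=
    linearIndependent_of_triangular (fun i => (Matrix.taylorCoeff M z₀ i).mulVecLin) deg hw
      hker hlead
  choose h hh hh₀ hMe using fun c => exists_mulVec_eq_pow_smul hM (hker c)
  set B := (Matrix.of e)ᵀ
  set G : 𝕜 → Matrix n n 𝕜 := fun z => (Matrix.of fun c => h c z)ᵀ
  have hB : B.det ≠ 0 := by simpa [B] using Matrix.det_of_ne_zero_of_linearIndependent he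
  have hG₀ : (G z₀).det ≠ 0 := by
    simpa [G, hh₀, hlead] using Matrix.det_of_ne_zero_of_linearIndependent hw
  have hdet (z : 𝕜) : (M z).det * B.det = (z - z₀) ^ (∑ c, deg c) * (G z).det := by
    have hMB : M z * B = Matrix.of fun r c => (z - z₀) ^ deg c * G z r c := by
      ext r c
      simpa [B, G, Matrix.mul_apply, Matrix.mulVec, dotProduct] using congrFun (hMe c z) r
    rw [← Matrix.det_mul, hMB, Matrix.det_mul_row, Finset.prod_pow_eq_pow_sum]
  refine ⟨fun z => (G z).det / B.det, (analyticAt_det fun r c => hh c r).div_const,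
    div_ne_zero hG₀ hB, fun z => ?_⟩
  rw [mul_div_assoc', ← hdet, mul_div_cancel_right₀ _ hB]

theorem exists_det_eq_pow_mul {ι : Type*} [Fintype ι]
    (hM : ∀ i j, AnalyticAt 𝕜 (fun z => M z i j) z₀) (deg : ι → ℕ) {e : ι → n → 𝕜}
    (w : Module.Basis ι 𝕜 (n → 𝕜))
    (hker : ∀ c, ∀ i < deg c, Matrix.taylorCoeff M z₀ i *ᵥ e c = 0)
    (hlead : ∀ c, Matrix.taylorCoeff M z₀ (deg c) *ᵥ e c = w c) :
    ∃ g : 𝕜 → 𝕜, AnalyticAt 𝕜 g z₀ ∧ g z₀ ≠ 0 ∧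
      ∀ z, (M z).det = (z - z₀) ^ (∑ c, deg c) * g z := by
  let σ := (w.indexEquiv (Pi.basisFun 𝕜 n)).symm
  rw [← σ.sum_comp]
  exact exists_det_eq_pow_mul_of_linearIndependent hM (deg ∘ σ)
    (w.linearIndependent.comp σ σ.injective) (fun r => hker (σ r)) (fun r => hlead (σ r))

end Determinant

theorem sum_sigma_fin_fst (κ : ℕ) (f : ℕ → ℕ) :
    ∑ c : (j : Fin (κ + 1)) × Fin (f j), (c.1 : ℕ) = ∑ j ∈ Finset.Icc 1 κ, j * f j := by
  rw [← Finset.univ_sigma_univ, Finset.sum_sigma]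
  simp only [Finset.sum_const, Finset.card_univ, Fintype.card_fin, smul_eq_mul]
  rw [Fin.sum_univ_eq_sum_range (fun j => f j * j), Finset.range_eq_Ico,
    Finset.sum_eq_sum_Ico_succ_bot (Nat.succ_pos κ), mul_zero, zero_add, Nat.succ_eq_add_one,
    Finset.Ico_add_one_right_eq_Icc]
  exact Finset.sum_congr rfl fun j _ => mul_comm _ _

theorem orderOfVanishing_eq_chi_of_transversal_eigenvalue_general
    {N : ℕ} (Ω : Set ℂ) (lam₀ : ℂ) (hlam₀ : lam₀ ∈ Ω)
    (𝔏 : ℂ → Matrix (Fin N) (Fin N) ℂ)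
    (hanal : ∀ i j, AnalyticOnNhd ℂ (fun z => 𝔏 z i j) Ω)
    (κ : ℕ)
    (L : ℕ → Matrix (Fin N) (Fin N) ℂ)
    (hL : ∀ k i j, L k i j = iteratedDeriv k (fun z => 𝔏 z i j) lam₀ / (Nat.factorial k : ℂ))
    (K : ℕ → Submodule ℂ (Fin N → ℂ))
    (hK : ∀ j, K j = ⨅ i ∈ Finset.range j, LinearMap.ker (L i).mulVecLin)
    (V : ℕ → Submodule ℂ (Fin N → ℂ))
    (hV0 : V 0 = LinearMap.range (L 0).mulVecLin)
    (hVj : ∀ j, 1 ≤ j → V j = (K j).map (L j).mulVecLin)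
    (hinternal : DirectSum.IsInternal (fun j : Fin (κ + 1) => V j.1)) :
    ∃ g : ℂ → ℂ, AnalyticAt ℂ g lam₀ ∧ g lam₀ ≠ 0 ∧
      ∀ᶠ z in nhds lam₀,
        (𝔏 z).det =
          (z - lam₀) ^ (∑ j ∈ Finset.Icc 1 κ, j * Module.finrank ℂ (V j)) * g z := by
  obtain rfl : L = Matrix.taylorCoeff 𝔏 lam₀ := funext fun k => Matrix.ext (hL k)
  have hV (j : ℕ) : V j = (K j).map (Matrix.taylorCoeff 𝔏 lam₀ j).mulVecLin := by
    rcases Nat.eq_zero_or_pos j with rfl | hj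
    · simp [hV0, hK, Submodule.map_top]
    · exact hVj j hj
  have hpreimage (j : ℕ) {y} (hy : y ∈ V j) :
      ∃ x, (∀ i < j, Matrix.taylorCoeff 𝔏 lam₀ i *ᵥ x = 0) ∧
        Matrix.taylorCoeff 𝔏 lam₀ j *ᵥ x = y := by
    obtain ⟨x, hxK, rfl⟩ := Submodule.mem_map.mp (hV j ▸ hy)
    refine ⟨x, fun i hi => ?_, rfl⟩
    rw [hK j] at hxK
    simp only [Submodule.mem_iInf, Finset.mem_range, LinearMap.mem_ker,
      Matrix.mulVecLin_apply] at hxK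
    exact hxK i hi
  let b (j : Fin (κ + 1)) := Module.finBasis ℂ (V j)
  choose e hker hlead using fun c => hpreimage c.1 (hinternal.collectedBasis_mem b c)
  obtain ⟨g, hg, hg₀, hdet⟩ := exists_det_eq_pow_mul (fun i j => hanal i j lam₀ hlam₀)
    _ (hinternal.collectedBasis b) hker hlead
  refine ⟨g, hg, hg₀, Eventually.of_forall fun z => ?_⟩
  rw [hdet, sum_sigma_fin_fst κ fun j => Module.finrank ℂ (V j)]

/-- If `λ₀` is a `κ`-transversal eigenvalue of the analytic matrix family `𝔏`,
i.e. `ℂ^N` is the internal direct sum of `range 𝔏₀` and `𝔏_j(K_j)` for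
`j = 1, …, κ` (where `𝔏_j = 𝔏^{(j)}(λ₀)/j!` and `K_j = ⋂_{i<j} ker 𝔏_i`), with
`𝔏_κ(K_κ) ≠ {0}`, then the order of vanishing at `λ₀` of `λ ↦ det 𝔏(λ)` equals
the Esquinas–López-Gómez multiplicity `∑_{j=1}^{κ} j · dim 𝔏_j(K_j)`. -/
theorem orderOfVanishing_eq_chi_of_transversal_eigenvalue
    {N : ℕ} (Ω : Set ℂ) (hΩ : IsOpen Ω) (lam₀ : ℂ) (hlam₀ : lam₀ ∈ Ω)
    (𝔏 : ℂ → Matrix (Fin N) (Fin N) ℂ)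
    (hanal : ∀ i j, AnalyticOnNhd ℂ (fun z => 𝔏 z i j) Ω)
    (κ : ℕ) (hκ : 1 ≤ κ)
    (L : ℕ → Matrix (Fin N) (Fin N) ℂ)
    (hL : ∀ k i j, L k i j = iteratedDeriv k (fun z => 𝔏 z i j) lam₀ / (Nat.factorial k : ℂ))
    (K : ℕ → Submodule ℂ (Fin N → ℂ))
    (hK : ∀ j, K j = ⨅ i ∈ Finset.range j, LinearMap.ker (L i).mulVecLin)
    (V : ℕ → Submodule ℂ (Fin N → ℂ))
    (hV0 : V 0 = LinearMap.range (L 0).mulVecLin)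
    (hVj : ∀ j, 1 ≤ j → V j = (K j).map (L j).mulVecLin)
    (hinternal : DirectSum.IsInternal (fun j : Fin (κ + 1) => V j.1))
    (hnontriv : V κ ≠ ⊥) :
    ∃ g : ℂ → ℂ, AnalyticAt ℂ g lam₀ ∧ g lam₀ ≠ 0 ∧
      ∀ᶠ z in nhds lam₀,
        (𝔏 z).det =
          (z - lam₀) ^ (∑ j ∈ Finset.Icc 1 κ, j * Module.finrank ℂ (V j)) * g z :=
  orderOfVanishing_eq_chi_of_transversal_eigenvalue_general Ω lam₀ hlam₀ 𝔏 hanal κ L hL K hK V hV0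
    hVj hinternal
end

section
/- The ratio of the alternating Gaussian sum to the Gaussian sum over the integers equals 2^{−1/4}; that is, ∑_{n ∈ ℤ} (−1)^n e^{−π n²} = 2^{−1/4} · ∑_{n ∈ ℤ} e^{−π n²}. (This ratio is the value of the global torsion invariant of the Möbius bundle over the circle ℝ/2√π ℤ.) -/
/-!
Both sums are Jacobi theta constants at `τ = i`: the left side is `θ₄(i)`, the right side
contains `θ₃(i)`. Poisson summation gives `θ₄(i) = θ₂(i)`, so Jacobi's identity
`θ₃⁴ = θ₂⁴ + θ₄⁴` becomes `θ₃(i)⁴ = 2 θ₄(i)⁴`. Jacobi's identity follows from the duplication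
formulas `θ₃(τ)² ± θ₄(τ)² = 2θ₃(2τ)², 2θ₂(2τ)²` and `θ₃(τ) ± θ₄(τ) = 2θ₃(4τ), 2θ₂(4τ)`, each
obtained by splitting a sum over `ℤ` or `ℤ²` according to the parity of `n` or of `m + n`.
-/

open Real Function

theorem summable_exp_neg_pi_mul_add_sq {a : ℝ} (ha : 0 < a) (c : ℝ) :
    Summable fun n : ℤ => rexp (-π * a * ((n : ℝ) + c) ^ 2) := by
  refine ((summable_pow_mul_jacobiTheta₂_term_bound (a * |c|) ha 0).of_nonneg_of_le
    (fun _ => (exp_pos _).le) fun n => ?_)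
  rw [pow_zero, one_mul, exp_le_exp, Int.cast_abs]
  have hcn : -(|c| * |(n : ℝ)|) ≤ c * n := abs_mul c n ▸ neg_abs_le _
  have hsq : 0 ≤ 2 * (c * n) + c ^ 2 + 2 * (|c| * |(n : ℝ)|) := by nlinarith [sq_nonneg c]
  nlinarith [mul_nonneg (mul_pos pi_pos ha).le hsq]

theorem Summable.neg_one_zpow_mul {α : Type*} {f : α → ℝ} (hf : Summable f) (χ : α → ℤ) :
    Summable fun x => (-1 : ℝ) ^ χ x * f x :=
  Summable.of_abs (by simpa only [abs_mul, abs_neg_one_zpow, one_mul] using hf.abs)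

theorem sq_tsum_eq_tsum_mul {ι : Type*} {f : ι → ℝ} (hf : Summable f) :
    (∑' i, f i) ^ 2 = ∑' z : ι × ι, f z.1 * f z.2 := by
  have hf' : Summable fun i => ‖f i‖ := by simpa only [Real.norm_eq_abs] using hf.abs
  rw [sq, tsum_mul_tsum_of_summable_norm hf' hf']

theorem tsum_add_tsum_neg_one_zpow_mul {α β : Type*} {f : α → ℝ} (hf : Summable f) {χ : α → ℤ}
    {e : β → α} (he : Injective e) (hrange : ∀ x, x ∈ Set.range e ↔ Even (χ x)) :
    ∑' x, f x + ∑' x, (-1 : ℝ) ^ χ x * f x = 2 * ∑' y, f (e y) := by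
  rw [← hf.tsum_add (hf.neg_one_zpow_mul χ), ← he.tsum_eq, ← tsum_mul_left]
  · refine tsum_congr fun y => ?_
    rw [((hrange (e y)).1 ⟨y, rfl⟩).neg_one_zpow]
    ring
  · intro x hx
    rw [hrange]
    by_contra h
    apply hx
    show f x + (-1 : ℝ) ^ χ x * f x = 0
    rw [(Int.not_even_iff_odd.1 h).neg_one_zpow]
    ring

theorem tsum_sub_tsum_neg_one_zpow_mul {α β : Type*} {f : α → ℝ} (hf : Summable f) {χ : α → ℤ}
    {e : β → α} (he : Injective e) (hrange : ∀ x, x ∈ Set.range e ↔ Odd (χ x)) :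
    ∑' x, f x - ∑' x, (-1 : ℝ) ^ χ x * f x = 2 * ∑' y, f (e y) := by
  have h := tsum_add_tsum_neg_one_zpow_mul hf (χ := fun x => χ x + 1) he
    fun x => by rw [hrange, Int.even_add_one, Int.not_even_iff_odd]
  simpa only [zpow_add_one₀ (by norm_num : (-1 : ℝ) ≠ 0), mul_neg_one, neg_mul, tsum_neg,
    ← sub_eq_add_neg] using h

/-- Jacobi theta constants at `τ = i a`, i.e. with nome `q = exp (-π a)`. -/
noncomputable def theta₂ (a : ℝ) : ℝ := ∑' n : ℤ, rexp (-π * a * ((n : ℝ) + 1 / 2) ^ 2)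
noncomputable def theta₃ (a : ℝ) : ℝ := ∑' n : ℤ, rexp (-π * a * (n : ℝ) ^ 2)
noncomputable def theta₄ (a : ℝ) : ℝ := ∑' n : ℤ, (-1 : ℝ) ^ n * rexp (-π * a * (n : ℝ) ^ 2)

section
variable {a : ℝ}

theorem summable_exp_neg_pi_mul_sq (ha : 0 < a) :
    Summable fun n : ℤ => rexp (-π * a * (n : ℝ) ^ 2) := by
  simpa only [add_zero] using summable_exp_neg_pi_mul_add_sq ha 0

theorem theta₂_pos (ha : 0 < a) : 0 < theta₂ a :=
  (summable_exp_neg_pi_mul_add_sq ha _).tsum_pos (fun _ => (exp_pos _).le) 0 (exp_pos _)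

theorem theta₃_pos (ha : 0 < a) : 0 < theta₃ a :=
  (summable_exp_neg_pi_mul_sq ha).tsum_pos (fun _ => (exp_pos _).le) 0 (exp_pos _)

theorem theta₃_add_theta₄ (ha : 0 < a) : theta₃ a + theta₄ a = 2 * theta₃ (4 * a) := by
  rw [theta₃, theta₄, tsum_add_tsum_neg_one_zpow_mul (summable_exp_neg_pi_mul_sq ha)
    (e := fun k : ℤ => 2 * k) (fun _ _ h => by simpa using h)
    fun n => ⟨fun ⟨k, hk⟩ => ⟨k, by simp only at hk; omega⟩,
      fun ⟨k, hk⟩ => ⟨k, by simp only; omega⟩⟩, theta₃]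
  congr 2 with k
  push_cast
  ring_nf

theorem theta₃_sub_theta₄ (ha : 0 < a) : theta₃ a - theta₄ a = 2 * theta₂ (4 * a) := by
  rw [theta₃, theta₄, tsum_sub_tsum_neg_one_zpow_mul (summable_exp_neg_pi_mul_sq ha)
    (e := fun k : ℤ => 2 * k + 1) (fun _ _ h => by simpa using h)
    fun n => ⟨fun ⟨k, hk⟩ => ⟨k, by simp only at hk; omega⟩,
      fun ⟨k, hk⟩ => ⟨k, by simp only; omega⟩⟩, theta₂]
  congr 2 with k
  push_cast
  ring_nf

theorem theta₃_sq (ha : 0 < a) :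
    theta₃ a ^ 2 = ∑' z : ℤ × ℤ, rexp (-π * a * (z.1 : ℝ) ^ 2) * rexp (-π * a * (z.2 : ℝ) ^ 2) :=
  sq_tsum_eq_tsum_mul (summable_exp_neg_pi_mul_sq ha)

theorem theta₄_sq (ha : 0 < a) :
    theta₄ a ^ 2 = ∑' z : ℤ × ℤ, (-1 : ℝ) ^ (z.1 + z.2) *
      (rexp (-π * a * (z.1 : ℝ) ^ 2) * rexp (-π * a * (z.2 : ℝ) ^ 2)) := by
  have hs : Summable fun n : ℤ => (-1 : ℝ) ^ n * rexp (-π * a * (n : ℝ) ^ 2) :=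
    (summable_exp_neg_pi_mul_sq ha).neg_one_zpow_mul id
  rw [theta₄, sq_tsum_eq_tsum_mul hs]
  refine tsum_congr fun z => ?_
  rw [zpow_add₀ (by norm_num)]
  ring

theorem summable_prod_exp_neg_pi_mul_sq (ha : 0 < a) :
    Summable fun z : ℤ × ℤ => rexp (-π * a * (z.1 : ℝ) ^ 2) * rexp (-π * a * (z.2 : ℝ) ^ 2) :=
  (summable_exp_neg_pi_mul_sq ha).mul_of_nonneg (summable_exp_neg_pi_mul_sq ha)
    (fun _ => (exp_pos _).le) fun _ => (exp_pos _).le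

/- `(m, n) ↦ (m + n, m - n)` maps `ℤ²` bijectively onto the points with even coordinate sum and
doubles `x² + y²`; its shift by `(1, 0)` does the same for odd coordinate sum, with `m, n`
replaced by `m + 1/2, n + 1/2`. -/
theorem theta₃_sq_add_theta₄_sq (ha : 0 < a) :
    theta₃ a ^ 2 + theta₄ a ^ 2 = 2 * theta₃ (2 * a) ^ 2 := by
  have he : Injective fun y : ℤ × ℤ => (y.1 + y.2, y.1 - y.2) := fun y y' h => by
    simp only [Prod.mk.injEq] at h
    ext <;> omega
  rw [theta₃_sq ha, theta₄_sq ha, tsum_add_tsum_neg_one_zpow_mul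
    (summable_prod_exp_neg_pi_mul_sq ha) (χ := fun z => z.1 + z.2) he, theta₃_sq (by positivity)]
  · congr 2 with y
    rw [← exp_add, ← exp_add]
    push_cast
    ring_nf
  · rintro ⟨x₁, x₂⟩
    refine ⟨fun ⟨y, hy⟩ => ⟨y.1, ?_⟩, fun ⟨r, hr⟩ => ⟨(r, x₁ - r), ?_⟩⟩
    · simp only [Prod.mk.injEq] at hy ⊢
      omega
    · simp only [Prod.mk.injEq] at hr ⊢
      omega

theorem theta₃_sq_sub_theta₄_sq (ha : 0 < a) :
    theta₃ a ^ 2 - theta₄ a ^ 2 = 2 * theta₂ (2 * a) ^ 2 := by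
  have he : Injective fun y : ℤ × ℤ => (y.1 + y.2 + 1, y.1 - y.2) := fun y y' h => by
    simp only [Prod.mk.injEq] at h
    ext <;> omega
  rw [theta₃_sq ha, theta₄_sq ha, tsum_sub_tsum_neg_one_zpow_mul
    (summable_prod_exp_neg_pi_mul_sq ha) (χ := fun z => z.1 + z.2) he, theta₂,
    sq_tsum_eq_tsum_mul (summable_exp_neg_pi_mul_add_sq (by positivity) _)]
  · congr 2 with y
    rw [← exp_add, ← exp_add]
    push_cast
    ring_nf
  · rintro ⟨x₁, x₂⟩
    refine ⟨fun ⟨y, hy⟩ => ⟨y.1, ?_⟩, fun ⟨r, hr⟩ => ⟨(r, x₁ - r - 1), ?_⟩⟩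
    · simp only [Prod.mk.injEq] at hy ⊢
      omega
    · simp only [Prod.mk.injEq] at hr ⊢
      omega

theorem theta₂_sq (ha : 0 < a) : theta₂ a ^ 2 = 2 * theta₂ (2 * a) * theta₃ (2 * a) := by
  have ha' : 0 < a / 2 := half_pos ha
  have h4 : 4 * (a / 2) = 2 * a := by ring
  have h2 : 2 * (a / 2) = a := by ring
  have hsq := theta₃_sq_sub_theta₄_sq ha'
  rw [h2, sq_sub_sq, theta₃_add_theta₄ ha', theta₃_sub_theta₄ ha', h4] at hsq
  linarith

theorem theta₃_pow_four (ha : 0 < a) : theta₃ a ^ 4 = theta₂ a ^ 4 + theta₄ a ^ 4 := by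
  have h : theta₃ a ^ 4 - theta₄ a ^ 4 =
      (theta₃ a ^ 2 + theta₄ a ^ 2) * (theta₃ a ^ 2 - theta₄ a ^ 2) := by
    ring
  rw [theta₃_sq_add_theta₄_sq ha, theta₃_sq_sub_theta₄_sq ha] at h
  linear_combination h - (theta₂ a ^ 2 + 2 * theta₂ (2 * a) * theta₃ (2 * a)) * theta₂_sq ha

theorem theta₄_eq_theta₂_inv_div_sqrt (ha : 0 < a) : theta₄ a = theta₂ a⁻¹ / √a := by
  have h := Complex.tsum_exp_neg_quadratic (a := a) (by rwa [Complex.ofReal_re]) (Complex.I / 2)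
  have hl : ∀ n : ℤ, Complex.exp (-π * a * n ^ 2 + 2 * π * (Complex.I / 2) * n) =
      ((-1 : ℝ) ^ n * rexp (-π * a * (n : ℝ) ^ 2) : ℝ) := fun n => by
    rw [Complex.exp_add, show 2 * π * (Complex.I / 2) * n = n * (π * Complex.I) by ring,
      Complex.exp_int_mul, Complex.exp_pi_mul_I]
    push_cast
    ring
  have hr : ∀ n : ℤ, Complex.exp (-π / a * (n + Complex.I * (Complex.I / 2)) ^ 2) =
      (rexp (-π * a⁻¹ * (((n - 1 : ℤ) : ℝ) + 1 / 2) ^ 2) : ℝ) := fun n => by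
    rw [Complex.ofReal_exp, ← mul_div_assoc, Complex.I_mul_I]
    push_cast
    ring_nf
  have hsqrt : (a : ℂ) ^ (1 / 2 : ℂ) = (√a : ℂ) := by
    rw [Real.sqrt_eq_rpow, Complex.ofReal_cpow ha.le]
    push_cast
    rfl
  have hshift := (Equiv.subRight (1 : ℤ)).tsum_eq
    fun n : ℤ => rexp (-π * a⁻¹ * ((n : ℝ) + 1 / 2) ^ 2)
  simp only [Equiv.subRight_apply] at hshift
  rw [tsum_congr hl, tsum_congr hr, hsqrt, ← Complex.ofReal_tsum, ← Complex.ofReal_tsum, hshift,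
    ← Complex.ofReal_one, ← Complex.ofReal_div, ← Complex.ofReal_mul, Complex.ofReal_inj] at h
  rw [theta₄, theta₂, h, one_div_mul_eq_div]

end

/-- The ratio of the alternating Gaussian sum to the Gaussian sum over `ℤ` is
`2^{-1/4}`: the global torsion invariant of the Möbius bundle over `ℝ/2√π ℤ`. -/
theorem tsum_alt_exp_neg_pi_sq_eq_rpow_mul :
    ∑' n : ℤ, (-1 : ℝ) ^ n * Real.exp (-Real.pi * (n : ℝ) ^ 2) =
      (2 : ℝ) ^ (-(1 : ℝ) / 4) * ∑' n : ℤ, Real.exp (-Real.pi * (n : ℝ) ^ 2) := by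
  have hθ₄ : theta₄ 1 = theta₂ 1 := by simpa using theta₄_eq_theta₂_inv_div_sqrt one_pos
  have hquartic : theta₃ 1 ^ 4 = 2 * theta₄ 1 ^ 4 := by
    rw [theta₃_pow_four one_pos, hθ₄]
    ring
  have hroot : ((2 : ℝ) ^ (-(1 : ℝ) / 4)) ^ 4 = 2⁻¹ := by
    rw [← Real.rpow_natCast, ← Real.rpow_mul zero_le_two]
    norm_num
  have h : theta₄ 1 = 2 ^ (-(1 : ℝ) / 4) * theta₃ 1 := by
    refine (pow_left_inj₀ (hθ₄ ▸ theta₂_pos one_pos).le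
      (mul_nonneg (by positivity) (theta₃_pos one_pos).le) four_ne_zero).1 ?_
    rw [mul_pow, hroot, hquartic]
    ring
  simpa only [theta₃, theta₄, mul_one] using h
end

section
/- Fix n ∈ ℕ and signs ε₁, …, ε_n ∈ {−1, 1}, and let m be the number of indices i with ε_i = −1. Then ∑_{k ∈ ℤⁿ} (∏_{i=1}^{n} ε_i^{k_i}) · e^{−π(k₁² + ⋯ + k_n²)} = 2^{−m/4} · ∑_{k ∈ ℤⁿ} e^{−π(k₁² + ⋯ + k_n²)}. (Consequently the set of values of the global torsion invariant of the n-dimensional torus ℝⁿ/(2√π ℤ)ⁿ is {2^{−m/4} : 0 ≤ m ≤ n}.) -/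
/-!
Write `θ(s, t) = ∑ₖ sᵏ e^{-π t k²}`. The lattice sum factors as `∏ᵢ θ(εᵢ, 1)`, so everything
reduces to `θ(-1, 1) = 2^{-1/4} θ(1, 1)`. Splitting `ℤ²` by the parity of `j + k` and substituting
`(j, k) = (u + v, u - v)` gives the duplication formula
`θ(s, t) θ(s', t) + θ(-s, t) θ(-s', t) = 2 θ(s s', 2t) θ(s / s', 2t)` for `s, s' = ±1`.
Three of its instances, together with the Poisson identity `θ(1, 1/2)² = 2 θ(1, 2)²`, eliminate
every value except `2 θ(-1, 1)⁴ = θ(1, 1)⁴`; the instance `θ(1, t) θ(-1, t) = θ(-1, 2t)²` fixes the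
sign of the fourth root.
-/

open Real Finset

section PiProduct

variable {R κ : Type*} [NormedCommRing R]

lemma summable_norm_prod_fin : ∀ {n : ℕ} (F : Fin n → κ → R),
    (∀ i, Summable fun k => ‖F i k‖) → Summable fun k : Fin n → κ => ‖∏ i, F i (k i)‖
  | 0, _, _ => .of_finite
  | n + 1, F, hF => by
    rw [← (Fin.consEquiv fun _ => κ).summable_iff]
    simpa [Fin.prod_univ_succ, Fin.consEquiv, Function.comp_def] using
      (hF 0).mul_norm (summable_norm_prod_fin (fun i => F i.succ) fun i => hF i.succ)

lemma tsum_prod_fin_eq_prod_tsum [CompleteSpace R] : ∀ {n : ℕ} (F : Fin n → κ → R),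
    (∀ i, Summable fun k => ‖F i k‖) → ∑' k : Fin n → κ, ∏ i, F i (k i) = ∏ i, ∑' k, F i k
  | 0, _, _ => by simp
  | n + 1, F, hF => by
    rw [← (Fin.consEquiv fun _ => κ).tsum_eq, Fin.prod_univ_succ,
      ← tsum_prod_fin_eq_prod_tsum (fun i => F i.succ) fun i => hF i.succ,
      tsum_mul_tsum_of_summable_norm (hF 0)
        (summable_norm_prod_fin (fun i => F i.succ) fun i => hF i.succ)]
    simp [Fin.prod_univ_succ, Fin.consEquiv]

end PiProduct

lemma tsum_one_add_neg_one_zpow_mul {R : Type*} [DivisionRing R] [TopologicalSpace R]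
    [IsTopologicalRing R] [T2Space R] (f : ℤ × ℤ → R) :
    ∑' p : ℤ × ℤ, (1 + (-1) ^ (p.1 + p.2)) * f p =
      2 * ∑' q : ℤ × ℤ, f (q.1 + q.2, q.1 - q.2) := by
  have hinj : Function.Injective fun q : ℤ × ℤ => (q.1 + q.2, q.1 - q.2) := by
    intro q q' h
    simp only [Prod.mk.injEq] at h
    ext <;> omega
  rw [← hinj.tsum_eq, ← tsum_mul_left]
  · congr 1 with q
    rw [show q.1 + q.2 + (q.1 - q.2) = 2 * q.1 by ring, zpow_mul]
    norm_num
  · intro p hp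
    obtain ⟨r, hr⟩ | hodd := Int.even_or_odd (p.1 + p.2)
    · exact ⟨(r, p.1 - r), Prod.ext (by simp) (by simp; omega)⟩
    · simp [Function.mem_support, hodd.neg_one_zpow] at hp

lemma summable_exp_neg_mul_int_sq {t : ℝ} (ht : 0 < t) :
    Summable fun k : ℤ => exp (-π * t * k ^ 2) := by
  simpa [mul_assoc] using summable_pow_mul_jacobiTheta₂_term_bound 0 ht 0

noncomputable def twistedTheta (s t : ℝ) : ℝ := ∑' k : ℤ, s ^ k * exp (-π * t * k ^ 2)

section twistedTheta

variable {s s' t : ℝ}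

lemma summable_norm_twistedTheta_term (hs : |s| = 1) (ht : 0 < t) :
    Summable fun k : ℤ => ‖s ^ k * exp (-π * t * k ^ 2)‖ := by
  simpa [abs_zpow, hs] using summable_exp_neg_mul_int_sq ht

lemma hasSum_twistedTheta_mul (hs : |s| = 1) (hs' : |s'| = 1) (ht : 0 < t) :
    HasSum (fun p : ℤ × ℤ => s ^ p.1 * s' ^ p.2 * exp (-π * t * (p.1 ^ 2 + p.2 ^ 2)))
      (twistedTheta s t * twistedTheta s' t) := by
  have h := summable_norm_twistedTheta_term hs ht
  have h' := summable_norm_twistedTheta_term hs' ht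
  have hterm : (fun p : ℤ × ℤ => s ^ p.1 * s' ^ p.2 * exp (-π * t * (p.1 ^ 2 + p.2 ^ 2))) =
      fun p => s ^ p.1 * exp (-π * t * p.1 ^ 2) * (s' ^ p.2 * exp (-π * t * p.2 ^ 2)) := by
    ext p
    rw [mul_add, exp_add]
    ring
  rw [hterm, twistedTheta, twistedTheta, tsum_mul_tsum_of_summable_norm h h']
  exact (summable_mul_of_summable_norm h h').hasSum

theorem twistedTheta_mul_add_neg_mul (hs : |s| = 1) (hs' : |s'| = 1) (ht : 0 < t) :
    twistedTheta s t * twistedTheta s' t + twistedTheta (-s) t * twistedTheta (-s') t =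
      2 * (twistedTheta (s * s') (2 * t) * twistedTheta (s / s') (2 * t)) := by
  have hs0 : s ≠ 0 := by rintro rfl; simp at hs
  have hs0' : s' ≠ 0 := by rintro rfl; simp at hs'
  have hneg_one : (-1 : ℝ) ≠ 0 := by norm_num
  have hsum := (hasSum_twistedTheta_mul hs hs' ht).add
    (hasSum_twistedTheta_mul (s := -s) (s' := -s') (by rwa [abs_neg]) (by rwa [abs_neg]) ht)
  have hdouble := hasSum_twistedTheta_mul (s := s * s') (s' := s / s') (t := 2 * t)
    (by rw [abs_mul, hs, hs', one_mul]) (by rw [abs_div, hs, hs', div_one]) (by linarith)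
  rw [← hsum.tsum_eq, ← hdouble.tsum_eq]
  calc _ = ∑' p : ℤ × ℤ, (1 + (-1) ^ (p.1 + p.2)) *
          (s ^ p.1 * s' ^ p.2 * exp (-π * t * (p.1 ^ 2 + p.2 ^ 2))) := by
        congr with p
        rw [neg_eq_neg_one_mul s, neg_eq_neg_one_mul s', mul_zpow, mul_zpow, zpow_add₀ hneg_one]
        ring
    _ = _ := by
      rw [tsum_one_add_neg_one_zpow_mul]
      congr with q
      push_cast
      rw [zpow_add₀ hs0, zpow_sub₀ hs0', mul_zpow, div_zpow]
      ring_nf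

lemma twistedTheta_one_pos (ht : 0 < t) : 0 < twistedTheta 1 t := by
  simpa [twistedTheta] using
    (summable_exp_neg_mul_int_sq ht).tsum_pos (fun k => (exp_pos _).le) 0 (exp_pos _)

lemma twistedTheta_neg_one_nonneg (ht : 0 < t) : 0 ≤ twistedTheta (-1) t := by
  have h := twistedTheta_mul_add_neg_mul (s := 1) (s' := -1) (by simp) (by simp) ht
  norm_num at h
  refine nonneg_of_mul_nonneg_right (a := twistedTheta 1 t) ?_ (twistedTheta_one_pos ht)
  nlinarith [mul_self_nonneg (twistedTheta (-1) (2 * t))]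

lemma twistedTheta_one_functional_equation (ht : 0 < t) :
    twistedTheta 1 t = 1 / t ^ (1 / 2 : ℝ) * twistedTheta 1 (1 / t) := by
  simpa [twistedTheta, div_eq_mul_inv] using tsum_exp_neg_mul_int_sq ht

lemma two_mul_twistedTheta_neg_one_one_pow_four :
    2 * twistedTheta (-1) 1 ^ 4 = twistedTheta 1 1 ^ 4 := by
  have h₁ := twistedTheta_mul_add_neg_mul (s := 1) (s' := 1) (by simp) (by simp)
    (by norm_num : (0 : ℝ) < 1 / 2)
  have h₂ := twistedTheta_mul_add_neg_mul (s := 1) (s' := 1) (by simp) (by simp) one_pos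
  have h₃ := twistedTheta_mul_add_neg_mul (s := 1) (s' := -1) (by simp) (by simp)
    (by norm_num : (0 : ℝ) < 1 / 2)
  have hP := twistedTheta_one_functional_equation (by norm_num : (0 : ℝ) < 2)
  norm_num at h₁ h₂ h₃ hP
  have hP' : twistedTheta 1 (1 / 2) ^ 2 = 2 * twistedTheta 1 2 ^ 2 := by
    rw [hP, mul_pow, inv_pow, ← sqrt_eq_rpow, sq_sqrt zero_le_two]
    ring
  linear_combination (-(twistedTheta 1 (1 / 2) * twistedTheta (-1) (1 / 2) +
      twistedTheta (-1) 1 ^ 2) / 2) * h₃ + twistedTheta (-1) (1 / 2) ^ 2 * (hP' - h₂) +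
    (twistedTheta 1 1 ^ 2 + twistedTheta (-1) 1 ^ 2) * (h₁ - hP' + h₂)

lemma twistedTheta_neg_one_one :
    twistedTheta (-1) 1 = 2 ^ (-(1 / 4) : ℝ) * twistedTheta 1 1 := by
  refine (pow_left_inj₀ (twistedTheta_neg_one_nonneg one_pos)
    (mul_pos (by positivity) (twistedTheta_one_pos one_pos)).le four_ne_zero).1 ?_
  rw [mul_pow, ← rpow_mul_natCast zero_le_two, ← two_mul_twistedTheta_neg_one_one_pow_four]
  norm_num
  ring

lemma twistedTheta_sign_one (hs : s = -1 ∨ s = 1) :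
    twistedTheta s 1 = (if s = -1 then 2 ^ (-(1 / 4) : ℝ) else 1) * twistedTheta 1 1 := by
  rcases hs with rfl | rfl <;> norm_num [twistedTheta_neg_one_one]

lemma tsum_lattice_eq_prod_twistedTheta {n : ℕ} (s : Fin n → ℝ) (hs : ∀ i, |s i| = 1)
    (ht : 0 < t) :
    ∑' k : Fin n → ℤ, (∏ i, s i ^ k i) * exp (-π * t * ∑ i, (k i : ℝ) ^ 2) =
      ∏ i, twistedTheta (s i) t := by
  simp only [twistedTheta]
  rw [← tsum_prod_fin_eq_prod_tsum _ fun i => summable_norm_twistedTheta_term (hs i) ht]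
  congr 1 with k
  rw [mul_sum, exp_sum, ← prod_mul_distrib]

end twistedTheta

/-- For signs `ε₁, …, ε_n ∈ {−1, 1}` with `m` of them equal to `−1`,
`∑_{k ∈ ℤⁿ} (∏ i, ε_i^{k_i}) e^{−π ∑ k_i²} = 2^{−m/4} ∑_{k ∈ ℤⁿ} e^{−π ∑ k_i²}`:
the values of the global torsion invariant of the `n`-torus are `2^{−m/4}`, `0 ≤ m ≤ n`. -/
theorem tsum_signed_gaussian_lattice
    (n : ℕ) (ε : Fin n → ℝ) (hε : ∀ i, ε i = -1 ∨ ε i = 1)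
    (m : ℕ) (hm : m = Set.ncard {i : Fin n | ε i = -1}) :
    ∑' k : Fin n → ℤ,
        (∏ i, ε i ^ (k i)) * Real.exp (-Real.pi * ∑ i, ((k i : ℝ) ^ 2)) =
      (2 : ℝ) ^ (-(m : ℝ) / 4) *
        ∑' k : Fin n → ℤ, Real.exp (-Real.pi * ∑ i, ((k i : ℝ) ^ 2)) := by
  have hsigned := tsum_lattice_eq_prod_twistedTheta ε
    (fun i => by rcases hε i with h | h <;> simp [h]) one_pos
  have hplain := tsum_lattice_eq_prod_twistedTheta (fun _ : Fin n => (1 : ℝ))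
    (fun _ => abs_one) one_pos
  simp only [mul_one, one_zpow, prod_const_one, one_mul, prod_const, card_univ,
    Fintype.card_fin] at hsigned hplain
  rw [hsigned, hplain, prod_congr rfl fun i _ => twistedTheta_sign_one (hε i), prod_mul_distrib,
    prod_const, card_univ, Fintype.card_fin, prod_ite, prod_const, prod_const_one, mul_one,
    ← rpow_natCast, ← rpow_mul zero_le_two, hm, Set.ncard_eq_toFinset_card', Set.toFinset_ofPred]
  ring_nf
end
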